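/- Let K be a compact metric space and let g = {g_k : k ∈ ℤ≥0} be a sequence of continuous maps K → K with sup_k dist_{C⁰}(g_k, f) ≤ d for a continuous map f : K → K. Fix x ∈ K and N ≥ 1, and let μ_N = (1/N)Σ_{k=0}^{N-1} δ(g_0^k(x)) be the empirical measure along the method trajectory. Then W₁(μ_N, f_#(μ_N)) ≤ d + 2·diam(K)/N, where f_# denotes pushforward by f and W₁ is the Kantorovich–Wasserstein distance. -/
import Mathlib


open MeasureTheory
open scoped NNReal ENNReal

/-- The trajectory of a method `g = {g_k}`: `methodOrbit g x k = g_0^k(x)` where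
`g_0^k = g_{k-1} ∘ ⋯ ∘ g_0` and `g_0^0 = id`. -/
def methodOrbit {K : Type*} (g : ℕ → K → K) (x : K) : ℕ → K
  | 0 => x
  | n + 1 => g n (methodOrbit g x n)

/-- The Kantorovich–Wasserstein distance
`W₁(μ,ν) = sup {|∫φ dμ − ∫φ dν| : φ : K → ℝ 1-Lipschitz}`. -/
noncomputable def W1 {K : Type*} [MetricSpace K] [MeasurableSpace K]
    (μ ν : MeasureTheory.Measure K) : ℝ :=
  sSup {r : ℝ | ∃ φ : K → ℝ, LipschitzWith 1 φ ∧ r = |∫ z, φ z ∂μ - ∫ z, φ z ∂ν|}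

lemma integral_empirical {K : Type*} [MetricSpace K] [MeasurableSpace K] [BorelSpace K]
    (y : ℕ → K) (N : ℕ) (ψ : K → ℝ) (hψ : Continuous ψ) :
    ∫ z, ψ z ∂(((N : ℝ≥0))⁻¹ • ∑ k ∈ Finset.range N, Measure.dirac (y k)) =
      (N : ℝ)⁻¹ * ∑ k ∈ Finset.range N, ψ (y k) := by
  have hint : ∀ k : ℕ, Integrable ψ (Measure.dirac (y k)) := fun k =>
    ⟨hψ.aestronglyMeasurable, by
      simp [HasFiniteIntegral, lintegral_dirac]⟩
  rw [show (((N : ℝ≥0))⁻¹ • ∑ k ∈ Finset.range N, Measure.dirac (y k)) =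
      (((((N : ℝ≥0))⁻¹ : ℝ≥0) : ℝ≥0∞) • ∑ k ∈ Finset.range N, Measure.dirac (y k)) from rfl,
    integral_smul_measure, integral_finset_sum_measure (fun k _ => hint k)]
  simp [integral_dirac, smul_eq_mul]

/-- Let `g = {g_k}` be a `d`-method for a continuous map `f` of a compact
metric space `K` (i.e. `dist(g_k z, f z) ≤ d` for all `k, z`). For the empirical measure
`μ_N = (1/N) ∑_{k<N} δ(g_0^k x)` along the method trajectory (`N ≥ 1`), one has
`W₁(μ_N, f_# μ_N) ≤ d + 2 · diam K / N`. -/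
theorem stmt6 {K : Type*} [MetricSpace K] [CompactSpace K] [MeasurableSpace K] [BorelSpace K]
    (f : K → K) (hf : Continuous f) (d : ℝ)
    (g : ℕ → K → K) (hgc : ∀ k, Continuous (g k))
    (hgd : ∀ k z, dist (g k z) (f z) ≤ d)
    (x : K) (N : ℕ) (hN : 1 ≤ N) :
    W1 (((N : ℝ≥0))⁻¹ • ∑ k ∈ Finset.range N, Measure.dirac (methodOrbit g x k))
        (Measure.map f
          (((N : ℝ≥0))⁻¹ • ∑ k ∈ Finset.range N, Measure.dirac (methodOrbit g x k))) ≤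
      d + 2 * Metric.diam (Set.univ : Set K) / N := by
  set y : ℕ → K := methodOrbit g x with hy
  set μ : Measure K := ((N : ℝ≥0))⁻¹ • ∑ k ∈ Finset.range N, Measure.dirac (y k) with hμ
  have hd0 : 0 ≤ d := le_trans dist_nonneg (hgd 0 x)
  have hdiam0 : 0 ≤ Metric.diam (Set.univ : Set K) := Metric.diam_nonneg
  have hN0 : (0 : ℝ) < N := by exact_mod_cast hN
  have hbound0 : 0 ≤ d + 2 * Metric.diam (Set.univ : Set K) / N := by positivity
  apply Real.sSup_le _ hbound0
  rintro r ⟨φ, hφ, rfl⟩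
  have hφc : Continuous φ := hφ.continuous
  have h1 : ∫ z, φ z ∂μ = (N : ℝ)⁻¹ * ∑ k ∈ Finset.range N, φ (y k) :=
    integral_empirical y N φ hφc
  have h2 : ∫ z, φ z ∂(Measure.map f μ) = (N : ℝ)⁻¹ * ∑ k ∈ Finset.range N, φ (f (y k)) := by
    rw [integral_map hf.aemeasurable hφc.aestronglyMeasurable]
    exact integral_empirical y N (φ ∘ f) (hφc.comp hf)
  rw [h1, h2, ← mul_sub, ← Finset.sum_sub_distrib]
  have key : ∑ k ∈ Finset.range N, (φ (y k) - φ (f (y k))) =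
      (φ (y 0) - φ (y N)) + ∑ k ∈ Finset.range N, (φ (y (k + 1)) - φ (f (y k))) := by
    rw [← Finset.sum_range_sub' (fun k => φ (y k)) N, ← Finset.sum_add_distrib]
    apply Finset.sum_congr rfl
    intro k _
    ring
  rw [key]
  have hterm : ∀ k ∈ Finset.range N, |φ (y (k + 1)) - φ (f (y k))| ≤ d := by
    intro k _
    have : y (k + 1) = g k (y k) := rfl
    rw [this, ← Real.dist_eq]
    calc dist (φ (g k (y k))) (φ (f (y k))) ≤ dist (g k (y k)) (f (y k)) := by
          simpa using hφ.dist_le_mul (g k (y k)) (f (y k))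
      _ ≤ d := hgd k (y k)
  have hsum : |(φ (y 0) - φ (y N)) + ∑ k ∈ Finset.range N, (φ (y (k + 1)) - φ (f (y k)))| ≤
      2 * Metric.diam (Set.univ : Set K) + N * d := by
    calc |(φ (y 0) - φ (y N)) + ∑ k ∈ Finset.range N, (φ (y (k + 1)) - φ (f (y k)))|
        ≤ |φ (y 0) - φ (y N)| + |∑ k ∈ Finset.range N, (φ (y (k + 1)) - φ (f (y k)))| :=
          abs_add_le _ _
      _ ≤ 2 * Metric.diam (Set.univ : Set K) + N * d := by
          gcongr ?_ + ?_
          · rw [← Real.dist_eq]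
            calc dist (φ (y 0)) (φ (y N)) ≤ dist (y 0) (y N) := by
                  simpa using hφ.dist_le_mul (y 0) (y N)
              _ ≤ Metric.diam (Set.univ : Set K) :=
                  Metric.dist_le_diam_of_mem (isCompact_univ.isBounded) trivial trivial
              _ ≤ 2 * Metric.diam (Set.univ : Set K) := by linarith
          · calc |∑ k ∈ Finset.range N, (φ (y (k + 1)) - φ (f (y k)))|
                ≤ ∑ k ∈ Finset.range N, |φ (y (k + 1)) - φ (f (y k))| :=
                  Finset.abs_sum_le_sum_abs _ _
              _ ≤ ∑ k ∈ Finset.range N, d := Finset.sum_le_sum hterm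
              _ = N * d := by simp [mul_comm]
  rw [abs_mul, abs_of_nonneg (by positivity : (0:ℝ) ≤ (N:ℝ)⁻¹)]
  calc (N : ℝ)⁻¹ * |(φ (y 0) - φ (y N)) + ∑ k ∈ Finset.range N, (φ (y (k + 1)) - φ (f (y k)))|
      ≤ (N : ℝ)⁻¹ * (2 * Metric.diam (Set.univ : Set K) + N * d) := by
        gcongr
    _ = d + 2 * Metric.diam (Set.univ : Set K) / N := by
        field_simp
        ring
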